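/- Let A and B be C*-algebras and let ψ: A ⊗ 𝒦 → M(B ⊗ 𝒦) be a nondegenerate homomorphism such that ψ(1_A ⊗ k) = 1_B ⊗ k for all k ∈ 𝒦 (using the canonical extension of ψ to multipliers). Then there exists a unique nondegenerate homomorphism φ: A → M(B) such that ψ = φ ⊗ id_𝒦. -/

import Mathlib

open scoped MultiplierAlgebra

noncomputable section

/-! ## Framework

`𝓜(ℂ, A)` is the multiplier algebra `M(A)` of a (non-unital) C⋆-algebra `A`
(Mathlib's `DoubleCentralizer`), and `(a : 𝓜(ℂ, A))` is the canonical image of `a : A`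
in it. -/

/-- A system of matrix units `{u i j}` (indexed by `ℕ`) in a non-unital C⋆-algebra `K`,
whose linear span is dense.  A C⋆-algebra carrying such a system is precisely (i.e., is
⋆-isomorphic to) the C⋆-algebra `𝒦` of compact operators on a separable
infinite-dimensional Hilbert space. -/
structure MatrixUnits (K : Type*) [NonUnitalCStarAlgebra K] where
  u : ℕ → ℕ → K
  u_ne_zero : ∀ i j, u i j ≠ 0
  u_mul : ∀ i j k l, u i j * u k l = if j = k then u i l else 0
  star_u : ∀ i j, star (u i j) = u j i
  dense_span : Dense (Submodule.span ℂ (Set.range fun p : ℕ × ℕ => u p.1 p.2) : Set K)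

/-- `K` is (a copy of) the C⋆-algebra `𝒦` of compact operators on a separable
infinite-dimensional Hilbert space. -/
def IsCompactOperatorsAlgebra (K : Type*) [NonUnitalCStarAlgebra K] : Prop :=
  Nonempty (MatrixUnits K)

/-- A homomorphism `φ : A → M(B)` is *nondegenerate* if `φ(A)·B` is dense in `B`. -/
def Nondegenerate {A B : Type*} [NonUnitalCStarAlgebra A] [NonUnitalCStarAlgebra B]
    (φ : A →⋆ₙₐ[ℂ] 𝓜(ℂ, B)) : Prop :=
  ∀ b : B, (b : 𝓜(ℂ, B)) ∈
    closure (Submodule.span ℂ {x : 𝓜(ℂ, B) | ∃ (a : A) (c : B), x = φ a * c} : Set 𝓜(ℂ, B))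

/-- The `A`-relative commutant `C(A, ι) = {a ∈ M(A) : ι(k)·a = a·ι(k) ∈ A for all k ∈ K}`
of a `K`-algebra `(A, ι)`. -/
def relComm {K A : Type*} [NonUnitalCStarAlgebra K] [NonUnitalCStarAlgebra A]
    (ι : K →⋆ₙₐ[ℂ] 𝓜(ℂ, A)) : Set 𝓜(ℂ, A) :=
  {a | ∀ k : K, ι k * a = a * ι k ∧ a * ι k ∈ Set.range ((↑) : A → 𝓜(ℂ, A))}

/-- A witness that `T` is (a copy of) the spatial tensor product `B ⊗ K`: a bilinear,
multiplicative, star-preserving map on elementary tensors whose range has dense linear span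
and which satisfies `‖b ⊗ k‖ = ‖b‖‖k‖`.  (Since the compact operators `𝒦` are nuclear and
simple, for `K = 𝒦` such data identifies `T` with the minimal tensor product `B ⊗ 𝒦`.) -/
structure CStarTensor (B K T : Type*) [NonUnitalCStarAlgebra B] [NonUnitalCStarAlgebra K]
    [NonUnitalCStarAlgebra T] where
  tmul : B → K → T
  add_tmul : ∀ b b' k, tmul (b + b') k = tmul b k + tmul b' k
  tmul_add : ∀ b k k', tmul b (k + k') = tmul b k + tmul b k'
  smul_tmul : ∀ (c : ℂ) b k, tmul (c • b) k = c • tmul b k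
  tmul_smul : ∀ (c : ℂ) b k, tmul b (c • k) = c • tmul b k
  tmul_mul_tmul : ∀ b b' k k', tmul b k * tmul b' k' = tmul (b * b') (k * k')
  star_tmul : ∀ b k, star (tmul b k) = tmul (star b) (star k)
  norm_tmul : ∀ b k, ‖tmul b k‖ = ‖b‖ * ‖k‖
  dense_span : Dense (Submodule.span ℂ {x : T | ∃ b k, x = tmul b k} : Set T)

/-- `ι` is the canonical nondegenerate homomorphism `1 ⊗ id : K → M(B ⊗ K)`, characterized
by `(1 ⊗ k)·(b ⊗ k') = b ⊗ (k·k')` and `(b ⊗ k')·(1 ⊗ k) = b ⊗ (k'·k)`. -/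
def IsOneTensorId {B K T : Type*} [NonUnitalCStarAlgebra B] [NonUnitalCStarAlgebra K]
    [NonUnitalCStarAlgebra T] (τ : CStarTensor B K T) (ι : K →⋆ₙₐ[ℂ] 𝓜(ℂ, T)) : Prop :=
  ∀ (k : K) (b : B) (k' : K),
    ι k * (τ.tmul b k' : 𝓜(ℂ, T)) = (τ.tmul b (k * k') : 𝓜(ℂ, T)) ∧
      (τ.tmul b k' : 𝓜(ℂ, T)) * ι k = (τ.tmul b (k' * k) : 𝓜(ℂ, T))

/-!
Fix the minimal projection `e = u₀₀` of `K`. The map `b ↦ b ⊗ e` identifies `B` isometrically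
with the corner `(1 ⊗ e) (B ⊗ K) (1 ⊗ e)`, and the hypothesis on `ψ` gives
`ψ(a ⊗ e) = (1 ⊗ e) ψ(a ⊗ e) (1 ⊗ e)`, so multiplication by `ψ(a ⊗ e)` on either side preserves
that corner; this defines `φ(a) ∈ M(B)`. Writing `u i j = u i 0 * e * u 0 j` and using
`ψ(a ⊗ k k' k'') = (1 ⊗ k) ψ(a ⊗ k') (1 ⊗ k'')` extends the identity `ψ(a ⊗ e) = φ(a) ⊗ e` to
`ψ(a ⊗ k) = φ(a) ⊗ k` by density. Compressing the nondegeneracy of `ψ` to the corner gives that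
of `φ`, and any `φ'` with `ψ = φ' ⊗ id` has `φ'(a) ⊗ e = ψ(a ⊗ e)`, hence `φ' = φ`.
-/

open scoped CStarAlgebra
open Function

section Density

variable {R E F : Type*} [Semiring R] [TopologicalSpace E] [AddCommMonoid E] [Module R E]
  [TopologicalSpace F] [AddCommMonoid F] [Module R F]

theorem ContinuousLinearMap.apply_mem_of_mem_closure_span (f : E →L[R] F) {s : Set E}
    {W : Submodule R F} (hW : IsClosed (W : Set F)) (h : Set.MapsTo f s W) {x : E}
    (hx : x ∈ closure (Submodule.span R s : Set E)) : f x ∈ W :=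
  closure_minimal (Submodule.span_le (p := W.comap (f : E →ₗ[R] F)).2 h)
    (hW.preimage f.continuous) hx

theorem ContinuousLinearMap.apply_mem_of_dense_span (f : E →L[R] F) {s : Set E}
    (hs : Dense (Submodule.span R s : Set E)) {W : Submodule R F} (hW : IsClosed (W : Set F))
    (h : Set.MapsTo f s W) (x : E) : f x ∈ W :=
  f.apply_mem_of_mem_closure_span hW h (hs x)

end Density

section Cancel

variable {A : Type*} [NonUnitalNormedRing A] [StarRing A] [CStarRing A]

theorem CStarRing.eq_of_forall_mul_left {x y : A} (h : ∀ c, c * x = c * y) : x = y := by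
  have : star (x - y) * (x - y) = 0 := by rw [mul_sub, h, sub_self]
  rwa [CStarRing.star_mul_self_eq_zero_iff, sub_eq_zero] at this

theorem CStarRing.eq_of_forall_mul_right {x y : A} (h : ∀ c, x * c = y * c) : x = y := by
  have : (x - y) * star (x - y) = 0 := by rw [sub_mul, h, sub_self]
  rwa [CStarRing.mul_star_self_eq_zero_iff, sub_eq_zero] at this

end Cancel

namespace DoubleCentralizer

variable {A : Type*} [NonUnitalCStarAlgebra A]

@[simp]
theorem coe_smul (c : ℂ) (a : A) : ((c • a : A) : 𝓜(ℂ, A)) = c • (a : 𝓜(ℂ, A)) :=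
  map_smul coeHom c a

@[simp]
theorem coe_star (a : A) : ((star a : A) : 𝓜(ℂ, A)) = star (a : 𝓜(ℂ, A)) :=
  map_star coeHom a

theorem fst_apply_mul (m : 𝓜(ℂ, A)) (a b : A) : m.fst (a * b) = m.fst a * b :=
  CStarRing.eq_of_forall_mul_left fun c => by
    rw [← m.central, ← mul_assoc, m.central, mul_assoc]

theorem snd_apply_mul (m : 𝓜(ℂ, A)) (a b : A) : m.snd (a * b) = a * m.snd b :=
  CStarRing.eq_of_forall_mul_right fun c => by
    rw [m.central, mul_assoc, ← m.central, mul_assoc]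

theorem mul_coe_eq_coe_fst (m : 𝓜(ℂ, A)) (a : A) : m * (a : 𝓜(ℂ, A)) = ↑(m.fst a) :=
  ext ℂ A _ _ <| Prod.ext (ContinuousLinearMap.ext fun x => fst_apply_mul m a x)
    (ContinuousLinearMap.ext fun x => m.central x a)

theorem coe_mul_eq_coe_snd (m : 𝓜(ℂ, A)) (a : A) : (a : 𝓜(ℂ, A)) * m = ↑(m.snd a) :=
  ext ℂ A _ _ <| Prod.ext (ContinuousLinearMap.ext fun x => (m.central a x).symm)
    (ContinuousLinearMap.ext fun x => snd_apply_mul m x a)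

theorem coe_injective : Injective ((↑) : A → 𝓜(ℂ, A)) := fun _ _ h =>
  CStarRing.eq_of_forall_mul_right fun c => congrArg (fun m : 𝓜(ℂ, A) => m.fst c) h

theorem ext_fst {x y : 𝓜(ℂ, A)} (h : ∀ a, x.fst a = y.fst a) : x = y := by
  have hsnd : ∀ a, x.snd a = y.snd a := fun a =>
    CStarRing.eq_of_forall_mul_right fun c => by rw [x.central, y.central, h]
  exact ext ℂ A _ _ <| Prod.ext (ContinuousLinearMap.ext h) (ContinuousLinearMap.ext hsnd)

theorem ext_mul_coe {x y : 𝓜(ℂ, A)} (h : ∀ a : A, x * a = y * a) : x = y :=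
  ext_fst fun a => coe_injective <| by rw [← mul_coe_eq_coe_fst, ← mul_coe_eq_coe_fst, h]

end DoubleCentralizer

namespace NonUnitalStarSubalgebra

variable {R C : Type*} [CommSemiring R] [StarRing R] [NonUnitalSemiring C] [StarRing C]
  [Module R C] [IsScalarTower R C C] [SMulCommClass R C C] [StarModule R C]

def idealizer (S : NonUnitalStarSubalgebra R C) : NonUnitalStarSubalgebra R C where
  carrier := {m | ∀ s ∈ S, m * s ∈ S ∧ s * m ∈ S}
  add_mem' hm hm' s hs :=
    ⟨add_mul _ _ s ▸ add_mem (hm s hs).1 (hm' s hs).1,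
      mul_add s _ _ ▸ add_mem (hm s hs).2 (hm' s hs).2⟩
  zero_mem' s _ := by simp only [zero_mul, mul_zero, zero_mem, and_self]
  mul_mem' hm hm' s hs :=
    ⟨mul_assoc _ _ s ▸ (hm _ (hm' s hs).1).1, (mul_assoc s _ _).symm ▸ (hm' _ (hm s hs).2).2⟩
  smul_mem' c m hm s hs :=
    ⟨smul_mul_assoc c m s ▸ SMulMemClass.smul_mem c (hm s hs).1,
      mul_smul_comm c s m ▸ SMulMemClass.smul_mem c (hm s hs).2⟩
  star_mem' {m} hm s hs := by
    have h := hm (star s) (star_mem hs)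
    refine ⟨?_, ?_⟩
    · simpa only [star_mul, star_star] using star_mem h.2
    · simpa only [star_mul, star_star] using star_mem h.1

end NonUnitalStarSubalgebra

namespace NonUnitalStarAlgHom

variable {B C : Type*} [NonUnitalCStarAlgebra B] [NonUnitalCStarAlgebra C]
  (j : B →⋆ₙₐ[ℂ] C) (hj : Injective j)

def toContinuousLinearMap (φ : B →⋆ₙₐ[ℂ] C) : B →L[ℂ] C :=
  ⟨φ, map_continuous φ⟩

@[simp]
theorem toContinuousLinearMap_apply (φ : B →⋆ₙₐ[ℂ] C) (b : B) : φ.toContinuousLinearMap b = φ b :=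
  rfl

theorem apply_invFun_mul_apply (m : (NonUnitalStarAlgHom.range j).idealizer) (b : B) :
    j (invFun j (m * j b)) = m * j b :=
  invFun_eq <| (mem_range j).1 (m.2 _ (mem_range_self j b)).1

theorem apply_invFun_apply_mul (m : (NonUnitalStarAlgHom.range j).idealizer) (b : B) :
    j (invFun j (j b * m)) = j b * m :=
  invFun_eq <| (mem_range j).1 (m.2 _ (mem_range_self j b)).2

def idealizerMultiplier (m : (NonUnitalStarAlgHom.range j).idealizer) : 𝓜(ℂ, B) where
  fst := LinearMap.mkContinuous
    { toFun b := invFun j (m * j b)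
      map_add' b b' := hj <| by
        rw [map_add j (invFun j _), apply_invFun_mul_apply, apply_invFun_mul_apply,
          apply_invFun_mul_apply, map_add, mul_add]
      map_smul' c b := hj <| by
        rw [RingHom.id_apply, map_smul j c (invFun j _), apply_invFun_mul_apply,
          apply_invFun_mul_apply, map_smul, mul_smul_comm] }
    ‖(m : C)‖ fun b => by
      rw [LinearMap.coe_mk, AddHom.coe_mk, ← norm_map j hj, apply_invFun_mul_apply,
        ← norm_map j hj b]
      exact norm_mul_le _ _
  snd := LinearMap.mkContinuous
    { toFun b := invFun j (j b * m)
      map_add' b b' := hj <| by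
        rw [map_add j (invFun j _), apply_invFun_apply_mul, apply_invFun_apply_mul,
          apply_invFun_apply_mul, map_add, add_mul]
      map_smul' c b := hj <| by
        rw [RingHom.id_apply, map_smul j c (invFun j _), apply_invFun_apply_mul,
          apply_invFun_apply_mul, map_smul, smul_mul_assoc] }
    ‖(m : C)‖ fun b => by
      rw [LinearMap.coe_mk, AddHom.coe_mk, ← norm_map j hj, apply_invFun_apply_mul,
        ← norm_map j hj b, mul_comm]
      exact norm_mul_le _ _
  central x y := hj <| by
    simp only [LinearMap.mkContinuous_apply, LinearMap.coe_mk, AddHom.coe_mk, map_mul,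
      apply_invFun_mul_apply, apply_invFun_apply_mul, mul_assoc]

theorem apply_idealizerMultiplier_fst (m : (NonUnitalStarAlgHom.range j).idealizer) (b : B) :
    j ((j.idealizerMultiplier hj m).fst b) = m * j b :=
  apply_invFun_mul_apply j m b

theorem apply_idealizerMultiplier_snd (m : (NonUnitalStarAlgHom.range j).idealizer) (b : B) :
    j ((j.idealizerMultiplier hj m).snd b) = j b * m :=
  apply_invFun_apply_mul j m b

def idealizerHom : (NonUnitalStarAlgHom.range j).idealizer →⋆ₙₐ[ℂ] 𝓜(ℂ, B) where
  toFun := j.idealizerMultiplier hj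
  map_smul' c m := DoubleCentralizer.ext_fst fun b => hj <| by
    simp [apply_idealizerMultiplier_fst, smul_mul_assoc]
  map_zero' := DoubleCentralizer.ext_fst fun b => hj <| by
    simp [apply_idealizerMultiplier_fst]
  map_add' m m' := DoubleCentralizer.ext_fst fun b => hj <| by
    simp [apply_idealizerMultiplier_fst, add_mul]
  map_mul' m m' := DoubleCentralizer.ext_fst fun b => hj <| by
    simp [apply_idealizerMultiplier_fst, mul_assoc]
  map_star' m := DoubleCentralizer.ext_fst fun b => hj <| by
    rw [DoubleCentralizer.star_fst, map_star, apply_idealizerMultiplier_snd,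
      apply_idealizerMultiplier_fst, star_mul, map_star, star_star]
    rfl

theorem apply_idealizerHom_fst (m : (NonUnitalStarAlgHom.range j).idealizer) (b : B) :
    j ((j.idealizerHom hj m).fst b) = m * j b :=
  j.apply_idealizerMultiplier_fst hj m b

end NonUnitalStarAlgHom

namespace MatrixUnits

variable {K : Type*} [NonUnitalCStarAlgebra K] (mu : MatrixUnits K)

theorem u_self_mul_u (i j : ℕ) : mu.u i i * mu.u i j = mu.u i j := by
  rw [mu.u_mul, if_pos rfl]

theorem u_eq_u_mul_u_self_mul_u (i j l : ℕ) : mu.u i j = mu.u i l * mu.u l l * mu.u l j := by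
  rw [mu.u_mul, if_pos rfl, mu.u_mul, if_pos rfl]

theorem isStarProjection_u_self (i : ℕ) : IsStarProjection (mu.u i i) :=
  ⟨mu.u_self_mul_u i i, mu.star_u i i⟩

theorem u_self_mul_mul_u_self_mem_span (i : ℕ) (k : K) :
    mu.u i i * k * mu.u i i ∈ ℂ ∙ mu.u i i := by
  refine (ContinuousLinearMap.mulLeftRight ℂ K (mu.u i i) (mu.u i i)).apply_mem_of_dense_span
    mu.dense_span (Submodule.closed_of_finiteDimensional _) ?_ k
  rintro _ ⟨⟨p, q⟩, rfl⟩
  simp only [ContinuousLinearMap.mulLeftRight_apply, SetLike.mem_coe, mu.u_mul]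
  by_cases hp : i = p <;> by_cases hq : q = i <;>
    simp_all [mu.u_mul, Submodule.mem_span_singleton_self]

end MatrixUnits

namespace CStarTensor

variable {B K T : Type*} [NonUnitalCStarAlgebra B] [NonUnitalCStarAlgebra K]
  [NonUnitalCStarAlgebra T] (τ : CStarTensor B K T)

theorem zero_tmul (k : K) : τ.tmul 0 k = 0 := by
  simpa using τ.smul_tmul 0 0 k

def tmulCLM (b : B) : K →L[ℂ] T :=
  LinearMap.mkContinuous
    { toFun := τ.tmul b
      map_add' := τ.tmul_add b
      map_smul' c k := τ.tmul_smul c b k }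
    ‖b‖ fun k => (τ.norm_tmul b k).le

def tmulStarHom {e : K} (he : IsStarProjection e) : B →⋆ₙₐ[ℂ] T where
  toFun b := τ.tmul b e
  map_smul' c b := τ.smul_tmul c b e
  map_zero' := τ.zero_tmul e
  map_add' b b' := τ.add_tmul b b' e
  map_mul' b b' := by rw [τ.tmul_mul_tmul, he.isIdempotentElem.eq]
  map_star' b := by rw [τ.star_tmul, he.isSelfAdjoint.star_eq]

@[simp]
theorem tmulStarHom_apply {e : K} (he : IsStarProjection e) (b : B) :
    τ.tmulStarHom he b = τ.tmul b e :=
  rfl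

theorem tmulStarHom_injective {e : K} (he : IsStarProjection e) (he₀ : e ≠ 0) :
    Injective (τ.tmulStarHom he) :=
  (injective_iff_map_eq_zero _).2 fun b hb => by
    simpa [τ.norm_tmul, he₀] using congrArg norm hb

end CStarTensor

theorem IsOneTensorId.mul_coe_tmul_mul {B K T : Type*} [NonUnitalCStarAlgebra B]
    [NonUnitalCStarAlgebra K] [NonUnitalCStarAlgebra T] {τ : CStarTensor B K T}
    {ι : K →⋆ₙₐ[ℂ] 𝓜(ℂ, T)} (h : IsOneTensorId τ ι) (k k' k'' : K) (b : B) :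
    ι k * (τ.tmul b k' : 𝓜(ℂ, T)) * ι k'' = ↑(τ.tmul b (k * k' * k'')) := by
  rw [(h k b k').1, (h k'' b _).2]

section Destabilization

variable {K A B TA TB : Type*} [NonUnitalCStarAlgebra K] [NonUnitalCStarAlgebra A]
  [NonUnitalCStarAlgebra B] [NonUnitalCStarAlgebra TA] [NonUnitalCStarAlgebra TB]
  (mu : MatrixUnits K) {τA : CStarTensor A K TA} {τB : CStarTensor B K TB}
  {ζ : K →⋆ₙₐ[ℂ] 𝓜(ℂ, TB)} {ψ : TA →⋆ₙₐ[ℂ] 𝓜(ℂ, TB)}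

variable (τB) in
def cornerEmbedding : B →⋆ₙₐ[ℂ] 𝓜(ℂ, TB) :=
  (DoubleCentralizer.coeHom : TB →⋆ₙₐ[ℂ] 𝓜(ℂ, TB)).comp
    (τB.tmulStarHom (mu.isStarProjection_u_self 0))

variable (τB) in
theorem cornerEmbedding_apply (b : B) :
    cornerEmbedding mu τB b = ↑(τB.tmul b (mu.u 0 0)) :=
  rfl

variable (τB) in
theorem cornerEmbedding_injective : Injective (cornerEmbedding mu τB) :=
  DoubleCentralizer.coe_injective.comp <|
    τB.tmulStarHom_injective (mu.isStarProjection_u_self 0) (mu.u_ne_zero 0 0)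

theorem corner_mem_range_cornerEmbedding (hζ : IsOneTensorId τB ζ) (t : TB) :
    ζ (mu.u 0 0) * ↑t * ζ (mu.u 0 0) ∈ NonUnitalStarAlgHom.range (cornerEmbedding mu τB) := by
  have hclosed : IsClosed ((NonUnitalStarAlgHom.range (cornerEmbedding mu τB)).toSubmodule :
      Set 𝓜(ℂ, TB)) := by
    simpa using (NonUnitalStarAlgHom.isometry _
      (cornerEmbedding_injective mu τB)).isClosedEmbedding.isClosed_range
  refine ((ContinuousLinearMap.mulLeftRight ℂ _ (ζ (mu.u 0 0)) (ζ (mu.u 0 0))).comp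
    (DoubleCentralizer.coeHom : TB →⋆ₙₐ[ℂ] 𝓜(ℂ, TB)).toContinuousLinearMap).apply_mem_of_dense_span
      τB.dense_span hclosed ?_ t
  rintro _ ⟨b, k, rfl⟩
  obtain ⟨c, hc⟩ := Submodule.mem_span_singleton.1 (mu.u_self_mul_mul_u_self_mem_span 0 k)
  refine (NonUnitalStarAlgHom.mem_range _).2 ⟨c • b, ?_⟩
  simp [cornerEmbedding_apply, hζ.mul_coe_tmul_mul, ← hc, τB.tmul_smul]

variable (hζ : IsOneTensorId τB ζ)
  (hψζ : ∀ (a : A) (k k' : K),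
    ψ (τA.tmul a (k' * k)) = ψ (τA.tmul a k') * ζ k ∧
      ψ (τA.tmul a (k * k')) = ζ k * ψ (τA.tmul a k'))
include hψζ

theorem psi_tmul_mul_mul (a : A) (k k' k'' : K) :
    ψ (τA.tmul a (k * k' * k'')) = ζ k * ψ (τA.tmul a k') * ζ k'' := by
  rw [mul_assoc, (hψζ a k _).2, (hψζ a k'' k').1, mul_assoc]

include hζ

theorem psi_tmul_mem_idealizer (a : A) :
    ψ (τA.tmul a (mu.u 0 0)) ∈ (NonUnitalStarAlgHom.range (cornerEmbedding mu τB)).idealizer := by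
  set p := ζ (mu.u 0 0)
  set m := ψ (τA.tmul a (mu.u 0 0))
  have hpm : p * m = m := by rw [← (hψζ a _ _).2, mu.u_self_mul_u]
  have hmp : m * p = m := by rw [← (hψζ a _ _).1, mu.u_self_mul_u]
  intro _ hs
  obtain ⟨b, rfl⟩ := (NonUnitalStarAlgHom.mem_range _).1 hs
  have hpb : p * cornerEmbedding mu τB b = cornerEmbedding mu τB b := by
    rw [cornerEmbedding_apply, (hζ _ _ _).1, mu.u_self_mul_u]
  have hbp : cornerEmbedding mu τB b * p = cornerEmbedding mu τB b := by
    rw [cornerEmbedding_apply, (hζ _ _ _).2, mu.u_self_mul_u]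
  constructor
  · have h : m * cornerEmbedding mu τB b = p * ↑(m.fst (τB.tmul b (mu.u 0 0))) * p := by
      rw [← DoubleCentralizer.mul_coe_eq_coe_fst, ← cornerEmbedding_apply,
        mul_assoc p, mul_assoc m, hbp, ← mul_assoc, hpm]
    exact h ▸ corner_mem_range_cornerEmbedding mu hζ _
  · have h : cornerEmbedding mu τB b * m = p * ↑(m.snd (τB.tmul b (mu.u 0 0))) * p := by
      rw [← DoubleCentralizer.coe_mul_eq_coe_snd, ← cornerEmbedding_apply,
        ← mul_assoc p, hpb, mul_assoc, hmp]
    exact h ▸ corner_mem_range_cornerEmbedding mu hζ _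

def destabilize : A →⋆ₙₐ[ℂ] 𝓜(ℂ, B) :=
  ((cornerEmbedding mu τB).idealizerHom (cornerEmbedding_injective mu τB)).comp <|
    NonUnitalStarAlgHom.codRestrict (ψ.comp (τA.tmulStarHom (mu.isStarProjection_u_self 0))) _
      (psi_tmul_mem_idealizer mu hζ hψζ)

theorem coe_tmul_destabilize_fst (a : A) (b : B) :
    (τB.tmul ((destabilize mu hζ hψζ a).fst b) (mu.u 0 0) : 𝓜(ℂ, TB)) =
      ψ (τA.tmul a (mu.u 0 0)) * ↑(τB.tmul b (mu.u 0 0)) :=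
  (cornerEmbedding mu τB).apply_idealizerHom_fst (cornerEmbedding_injective mu τB)
    ⟨_, psi_tmul_mem_idealizer mu hζ hψζ a⟩ b

theorem psi_tmul_mul_coe_tmul (a : A) (b : B) (k k' : K) :
    ψ (τA.tmul a k) * ↑(τB.tmul b k') =
      ↑(τB.tmul ((destabilize mu hζ hψζ a).fst b) (k * k')) := by
  set c := (destabilize mu hζ hψζ a).fst b
  let lhs : K →L[ℂ] 𝓜(ℂ, TB) := ((ContinuousLinearMap.mul ℂ _).flip ↑(τB.tmul b k')).comp
    (ψ.toContinuousLinearMap.comp (τA.tmulCLM a))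
  let rhs : K →L[ℂ] 𝓜(ℂ, TB) :=
    (DoubleCentralizer.coeHom : TB →⋆ₙₐ[ℂ] 𝓜(ℂ, TB)).toContinuousLinearMap.comp
      ((τB.tmulCLM c).comp ((ContinuousLinearMap.mul ℂ K).flip k'))
  suffices lhs = rhs from congr($this k)
  refine ContinuousLinearMap.ext_on mu.dense_span ?_
  rintro _ ⟨⟨p, q⟩, rfl⟩
  calc ψ (τA.tmul a (mu.u p q)) * ↑(τB.tmul b k')
      = ζ (mu.u p 0) * ψ (τA.tmul a (mu.u 0 0)) * (ζ (mu.u 0 q) * ↑(τB.tmul b k')) := by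
        rw [mu.u_eq_u_mul_u_self_mul_u p q 0, psi_tmul_mul_mul hψζ, mul_assoc _ (ζ _)]
    _ = ζ (mu.u p 0) * (ψ (τA.tmul a (mu.u 0 0)) * ↑(τB.tmul b (mu.u 0 0))) *
          ζ (mu.u 0 q * k') := by
        have h : (τB.tmul b (mu.u 0 q * k') : 𝓜(ℂ, TB)) =
            ↑(τB.tmul b (mu.u 0 0)) * ζ (mu.u 0 q * k') := by
          rw [(hζ _ _ _).2, ← mul_assoc, mu.u_self_mul_u]
        rw [(hζ _ _ _).1, h]
        simp only [mul_assoc]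
    _ = ↑(τB.tmul c (mu.u p q * k')) := by
        rw [← coe_tmul_destabilize_fst, hζ.mul_coe_tmul_mul, ← mul_assoc (mu.u p 0 * mu.u 0 0),
          ← mu.u_eq_u_mul_u_self_mul_u]

theorem coe_tmul_mul_psi_tmul (a : A) (b : B) (k k' : K) :
    ↑(τB.tmul b k') * ψ (τA.tmul a k) =
      ↑(τB.tmul ((destabilize mu hζ hψζ a).snd b) (k' * k)) := by
  have hφ : (destabilize mu hζ hψζ (star a)).fst (star b) =
      star ((destabilize mu hζ hψζ a).snd b) := by
    rw [map_star (destabilize mu hζ hψζ), DoubleCentralizer.star_fst, star_star]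
  apply star_injective
  rw [star_mul, ← DoubleCentralizer.coe_star, ← map_star, τA.star_tmul, τB.star_tmul,
    psi_tmul_mul_coe_tmul mu hζ hψζ, hφ, ← DoubleCentralizer.coe_star, τB.star_tmul, star_mul]

theorem exists_corner_psi_tmul_mul_coe_eq (a : A) (k : K) (t : TB) :
    ∃ c : B, ζ (mu.u 0 0) * (ψ (τA.tmul a k) * t) * ζ (mu.u 0 0) =
      cornerEmbedding mu τB ((destabilize mu hζ hψζ a).fst c) := by
  obtain ⟨c, hc⟩ := (NonUnitalStarAlgHom.mem_range _).1 <|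
    corner_mem_range_cornerEmbedding mu hζ ((ζ (mu.u 0 0 * k)).fst t)
  refine ⟨c, ?_⟩
  have h1 : ζ (mu.u 0 0) * ψ (τA.tmul a k) = ψ (τA.tmul a (mu.u 0 0)) * ζ (mu.u 0 0 * k) := by
    rw [← (hψζ a _ _).2, ← (hψζ a _ _).1, ← mul_assoc, mu.u_self_mul_u]
  have h2 : ζ (mu.u 0 0) * ζ (mu.u 0 0 * k) = ζ (mu.u 0 0 * k) := by
    rw [← map_mul, ← mul_assoc, mu.u_self_mul_u]
  rw [cornerEmbedding_apply, coe_tmul_destabilize_fst, ← cornerEmbedding_apply, hc,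
    ← DoubleCentralizer.mul_coe_eq_coe_fst, ← mul_assoc, h1, ← mul_assoc (ζ _), h2]
  simp only [mul_assoc]

theorem destabilize_nondegenerate (hψ : Nondegenerate ψ) :
    Nondegenerate (destabilize mu hζ hψζ) := by
  intro b
  set φ := destabilize mu hζ hψζ
  set j := cornerEmbedding mu τB
  set S := Submodule.span ℂ {x : 𝓜(ℂ, B) | ∃ (a : A) (c : B), x = φ a * c}
  set N := S.topologicalClosure
  set ι := (DoubleCentralizer.coeHom : B →⋆ₙₐ[ℂ] 𝓜(ℂ, B)).toContinuousLinearMap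
  set N' := N.comap ι.toLinearMap
  set P := N'.map j.toContinuousLinearMap.toLinearMap
  set compress := ContinuousLinearMap.mulLeftRight ℂ 𝓜(ℂ, TB) (ζ (mu.u 0 0)) (ζ (mu.u 0 0))
    with hcompress
  -- `P = closure (span (φ(A)·B)) ⊗ e`; compressing by `1 ⊗ e` maps `ψ(TA)·TB`, hence `b ⊗ e`,
  -- into it.
  have hP : IsClosed (P : Set 𝓜(ℂ, TB)) :=
    (NonUnitalStarAlgHom.isometry _ (cornerEmbedding_injective mu τB)).isClosedEmbedding.isClosedMap
      _ (S.isClosed_topologicalClosure.preimage ι.continuous)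
  have hφP (a : A) (c : B) : j ((φ a).fst c) ∈ P :=
    Submodule.mem_map_of_mem <| Submodule.mem_comap.2 <| S.le_topologicalClosure <|
      Submodule.subset_span ⟨a, c, DoubleCentralizer.mul_coe_eq_coe_fst _ _ |>.symm⟩
  have hψP (x : TA) (t : TB) : ζ (mu.u 0 0) * (ψ x * t) * ζ (mu.u 0 0) ∈ P := by
    refine ((compress.comp ((ContinuousLinearMap.mul ℂ 𝓜(ℂ, TB)).flip (t : 𝓜(ℂ, TB)))).comp
      ψ.toContinuousLinearMap).apply_mem_of_dense_span τA.dense_span hP ?_ x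
    rintro _ ⟨a, k, rfl⟩
    obtain ⟨c, hc⟩ := exists_corner_psi_tmul_mul_coe_eq mu hζ hψζ a k t
    simpa [hcompress, hc] using hφP a c
  have hjb : j b ∈ P := by
    have h := compress.apply_mem_of_mem_closure_span hP (by rintro _ ⟨x, t, rfl⟩; exact hψP x t)
      (hψ (τB.tmul b (mu.u 0 0)))
    rwa [hcompress, ContinuousLinearMap.mulLeftRight_apply, hζ.mul_coe_tmul_mul, mu.u_self_mul_u,
      mu.u_self_mul_u] at h
  obtain ⟨b', hb', hb'b⟩ := hjb
  rw [cornerEmbedding_injective mu τB hb'b] at hb'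
  exact hb'

theorem eq_destabilize (φ : A →⋆ₙₐ[ℂ] 𝓜(ℂ, B))
    (h : ∀ (a : A) (b : B), ∃ c : B, (c : 𝓜(ℂ, B)) = φ a * b ∧
      ψ (τA.tmul a (mu.u 0 0)) * ↑(τB.tmul b (mu.u 0 0)) =
        ↑(τB.tmul c (mu.u 0 0 * mu.u 0 0))) :
    φ = destabilize mu hζ hψζ :=
  NonUnitalStarAlgHom.ext fun a => DoubleCentralizer.ext_mul_coe fun b => by
    obtain ⟨c, hc, hψc⟩ := h a b
    have : c = (destabilize mu hζ hψζ a).fst b := cornerEmbedding_injective mu τB <| by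
      rw [cornerEmbedding_apply, cornerEmbedding_apply, coe_tmul_destabilize_fst, hψc,
        mu.u_self_mul_u]
    rw [← hc, DoubleCentralizer.mul_coe_eq_coe_fst, this]

end Destabilization

/-- The identities `ψ(1 ⊗ k) = 1 ⊗ k` and `ψ = φ ⊗ id` are expressed through the action on
elementary tensors. -/
theorem exists_unique_destabilized_hom
    {K A B TA TB : Type*} [NonUnitalCStarAlgebra K] [NonUnitalCStarAlgebra A]
    [NonUnitalCStarAlgebra B] [NonUnitalCStarAlgebra TA] [NonUnitalCStarAlgebra TB]
    (hK : IsCompactOperatorsAlgebra K)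
    (τA : CStarTensor A K TA) (τB : CStarTensor B K TB)
    (ζ : K →⋆ₙₐ[ℂ] 𝓜(ℂ, TB)) (hζ : IsOneTensorId τB ζ)
    (ψ : TA →⋆ₙₐ[ℂ] 𝓜(ℂ, TB)) (hψ : Nondegenerate ψ)
    (hψζ : ∀ (a : A) (k k' : K),
      ψ (τA.tmul a (k' * k)) = ψ (τA.tmul a k') * ζ k ∧
        ψ (τA.tmul a (k * k')) = ζ k * ψ (τA.tmul a k')) :
    ∃! φ : A →⋆ₙₐ[ℂ] 𝓜(ℂ, B), Nondegenerate φ ∧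
      ∀ (a : A) (k : K) (b : B) (k' : K),
        (∃ c : B, (c : 𝓜(ℂ, B)) = φ a * b ∧
          ψ (τA.tmul a k) * (τB.tmul b k' : 𝓜(ℂ, TB)) = (τB.tmul c (k * k') : 𝓜(ℂ, TB))) ∧
        (∃ c' : B, (c' : 𝓜(ℂ, B)) = (b : 𝓜(ℂ, B)) * φ a ∧
          (τB.tmul b k' : 𝓜(ℂ, TB)) * ψ (τA.tmul a k) =
            (τB.tmul c' (k' * k) : 𝓜(ℂ, TB))) := by
  obtain ⟨mu⟩ := hK
  refine ⟨destabilize mu hζ hψζ, ⟨destabilize_nondegenerate mu hζ hψζ hψ, fun a k b k' => ?_⟩,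
    fun φ hφ => eq_destabilize mu hζ hψζ φ fun a b => (hφ.2 a _ b _).1⟩
  exact ⟨⟨_, (DoubleCentralizer.mul_coe_eq_coe_fst _ _).symm,
      psi_tmul_mul_coe_tmul mu hζ hψζ a b k k'⟩,
    ⟨_, (DoubleCentralizer.coe_mul_eq_coe_snd _ _).symm,
      coe_tmul_mul_psi_tmul mu hζ hψζ a b k k'⟩⟩
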